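/- arXiv:1109.5761 — 7 statements merged into one kernel-verified Lean document; each statement's English description precedes it below -/
import Mathlib

section
/- Let G be a finite group of characteristic p (i.e., C_G(O_p(G)) ≤ O_p(G)). If P is a p-subgroup of G and H is a subgroup with P·C_G(P) ≤ H ≤ N_G(P), then H has characteristic p, i.e., C_H(O_p(H)) ≤ O_p(H). -/
open Subgroup

noncomputable section

/-- The `p`-core `O_p(G)`: the largest normal `p`-subgroup of `G`
(defined as the join of all normal `p`-subgroups). -/
def pCore (p : ℕ) (G : Type*) [Group G] : Subgroup G :=
  ⨆ P ∈ {P : Subgroup G | P.Normal ∧ IsPGroup p ↥P}, P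

/-- A group has characteristic `p` if `C_G(O_p(G)) ≤ O_p(G)`. -/
def CharacteristicP (p : ℕ) (G : Type*) [Group G] : Prop :=
  Subgroup.centralizer ((pCore p G : Subgroup G) : Set G) ≤ pCore p G

/-- `G` has local characteristic `p` if the normalizer of every nontrivial
`p`-subgroup has characteristic `p`. -/
def LocalCharacteristicP (p : ℕ) (G : Type*) [Group G] : Prop :=
  ∀ Q : Subgroup G, Q ≠ ⊥ → IsPGroup p ↥Q → CharacteristicP p ↥(Subgroup.normalizer (Q : Set G))

/-- `G` has parabolic characteristic `p` if every `p`-local subgroup containing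
a Sylow `p`-subgroup has characteristic `p`. -/
def ParabolicCharacteristicP (p : ℕ) (G : Type*) [Group G] : Prop :=
  ∀ Q : Subgroup G, Q ≠ ⊥ → IsPGroup p ↥Q →
    (∃ S : Sylow p G, (S : Subgroup G) ≤ Subgroup.normalizer (Q : Set G)) → CharacteristicP p ↥(Subgroup.normalizer (Q : Set G))

/-- A `p`-subgroup `R` is `p`-radical if `R = O_p(N_G(R))`. -/
def IsRadicalPSubgroup (p : ℕ) {G : Type*} [Group G] (R : Subgroup G) : Prop :=
  IsPGroup p ↥R ∧ (pCore p ↥(Subgroup.normalizer (R : Set G))).map (Subgroup.normalizer (R : Set G)).subtype = R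

/-- A `p`-subgroup `R` is `p`-centric if `Z(R) = R ⊓ C_G(R)` is a Sylow `p`-subgroup
of `C_G(R)` (equivalently, in a finite group, a maximal `p`-subgroup of `C_G(R)`). -/
def IsPCentric (p : ℕ) {G : Type*} [Group G] (R : Subgroup G) : Prop :=
  IsPGroup p ↥R ∧
    IsPGroup p ↥(R ⊓ Subgroup.centralizer (R : Set G)) ∧
    ∀ Q : Subgroup G, Q ≤ Subgroup.centralizer (R : Set G) → IsPGroup p ↥Q →
      R ⊓ Subgroup.centralizer (R : Set G) ≤ Q → Q = R ⊓ Subgroup.centralizer (R : Set G)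

/-- An element of order `p` is `p`-central if it lies in the center of some
Sylow `p`-subgroup of `G`. -/
def IsPCentralElement (p : ℕ) {G : Type*} [Group G] (x : G) : Prop :=
  orderOf x = p ∧ ∃ S : Sylow p G, x ∈ (S : Subgroup G) ∧ ∀ y ∈ (S : Subgroup G), x * y = y * x

/-- A `p`-subgroup is purely noncentral if it contains no `p`-central element of `G`. -/
def PurelyNoncentral (p : ℕ) {G : Type*} [Group G] (P : Subgroup G) : Prop :=
  ∀ x ∈ P, ¬ IsPCentralElement p x

/-- Conjugation action of `g` on the group algebra. -/
def conjA {k : Type*} [Semiring k] {G : Type*} [Group G] (g : G) (x : MonoidAlgebra k G) :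
    MonoidAlgebra k G :=
  MonoidAlgebra.single g 1 * x * MonoidAlgebra.single g⁻¹ 1

/-- The relative trace map `Tr_H^G` on the group algebra (summing conjugates over
a set of coset representatives of `H`). -/
def relTr {k : Type*} [Semiring k] {G : Type*} [Group G] (H : Subgroup G)
    (x : MonoidAlgebra k G) : MonoidAlgebra k G :=
  ∑ᶠ q : G ⧸ H, conjA (Quotient.out q) x

/-- A block (idempotent) of `kG`: a primitive central idempotent. -/
def IsBlockOf (k : Type*) [Semiring k] (G : Type*) [Group G] (e : MonoidAlgebra k G) : Prop :=
  e ≠ 0 ∧ e * e = e ∧ (∀ x, e * x = x * e) ∧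
    ∀ f g : MonoidAlgebra k G, (∀ x, f * x = x * f) → (∀ x, g * x = x * g) →
      f * f = f → g * g = g → f * g = 0 → f + g = e → f = 0 ∨ g = 0

/-- `D` is a defect group of the block `e`: `D` is a `p`-subgroup, minimal with the
property that `e` lies in the image of the relative trace map `Tr_D^G` on `D`-fixed points. -/
def IsDefectGroupOf (p : ℕ) (k : Type*) [Semiring k] (G : Type*) [Group G]
    (D : Subgroup G) (e : MonoidAlgebra k G) : Prop :=
  IsPGroup p ↥D ∧
    (∃ x, (∀ h ∈ D, conjA h x = x) ∧ relTr D x = e) ∧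
    ∀ Q : Subgroup G, Q ≤ D → (∃ x, (∀ h ∈ Q, conjA h x = x) ∧ relTr Q x = e) → Q = D

/-- The augmentation map on the group algebra; a block is principal iff its
augmentation is nonzero. -/
def augm {k : Type*} [Semiring k] {G : Type*} [Group G] (x : MonoidAlgebra k G) : k :=
  Finsupp.sum x.coeff fun _ a => a

/-- `E` is subnormal in `G`. -/
def SubnormalIn {G : Type*} [Group G] (E : Subgroup G) : Prop :=
  ∃ (n : ℕ) (f : ℕ → Subgroup G), f 0 = E ∧ f n = ⊤ ∧
    ∀ i < n, f i ≤ f (i + 1) ∧ ((f i).subgroupOf (f (i + 1))).Normal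

/-- A quasisimple group: perfect with simple central quotient. -/
def IsQuasisimpleGroup (H : Type*) [Group H] : Prop :=
  commutator H = ⊤ ∧ IsSimpleGroup (H ⧸ Subgroup.center H)

/-- A component of `G`: a subnormal quasisimple subgroup. -/
def IsComponentOf {G : Type*} [Group G] (E : Subgroup G) : Prop :=
  SubnormalIn E ∧ IsQuasisimpleGroup ↥E

/-- The Fitting subgroup: the join of all nilpotent normal subgroups. -/
def fittingSubgroup (G : Type*) [Group G] : Subgroup G :=
  ⨆ P ∈ {P : Subgroup G | P.Normal ∧ Group.IsNilpotent ↥P}, P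

/-- The generalized Fitting subgroup `F*(G) = F(G)E(G)`. -/
def generalizedFitting (G : Type*) [Group G] : Subgroup G :=
  fittingSubgroup G ⊔ ⨆ E ∈ {E : Subgroup G | IsComponentOf E}, E

/-!
Let `R = O_p(G)` and `Q = O_p(H)`. As `H` normalizes `P` and `R`, both `P` and `R ∩ H` lie in `Q`,
so a `p'`-element `y ∈ C_H(Q)` centralizes `P` and `C_R(P)`. Thompson's `A × B` lemma, for the
`p'`-group `⟨y⟩` commuting with the `p`-group `P` acting on `R`, then shows that `y` centralizes `R`;
hence `y ∈ R` and `y = 1`. So `C_H(Q)` is a normal `p`-subgroup of `H`, i.e. `C_H(Q) ≤ Q`.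
-/

section

variable {G : Type*} [Group G] {p : ℕ}

theorem le_pCore {N : Subgroup G} (hN : N.Normal) (hNp : IsPGroup p N) : N ≤ pCore p G :=
  le_biSup id (show N ∈ {P : Subgroup G | P.Normal ∧ IsPGroup p P} from ⟨hN, hNp⟩)

instance normal_pCore : (pCore p G).Normal :=
  biSup_normal _ id fun _ hP => hP.1

theorem isPGroup_pCore [Finite G] [Fact p.Prime] : IsPGroup p (pCore p G) := by
  have hsup : SupClosed {P : Subgroup G | P.Normal ∧ IsPGroup p P} :=
    fun P ⟨_, hPp⟩ K ⟨hK, hKp⟩ => ⟨sup_normal P K, hPp.to_sup_of_normal_right hKp⟩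
  have hmem := hsup.sSup_mem (Set.toFinite _) ⟨normal_bot, IsPGroup.of_bot⟩ le_rfl
  rw [sSup_eq_iSup] at hmem
  exact hmem.2

theorem IsPGroup.eq_one_of_mem_of_pow_eq_one [Fact p.Prime] {R : Subgroup G} (hR : IsPGroup p R)
    {g : G} (hg : g ∈ R) {n : ℕ} (hn : n.Coprime p) (hgn : g ^ n = 1) : g = 1 :=
  congrArg Subtype.val <| orderOf_eq_one_iff.mp <|
    (hR.orderOf_coprime hn.symm ⟨g, hg⟩).eq_one_of_dvd (orderOf_dvd_of_pow_eq_one (Subtype.ext hgn))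

theorem isPGroup_of_forall_coprime_orderOf_eq_one [Finite G] [hp : Fact p.Prime] {K : Subgroup G}
    (h : ∀ g ∈ K, (orderOf g).Coprime p → g = 1) : IsPGroup p K := by
  rintro ⟨g, hg⟩
  have hn : orderOf g ≠ 0 := (orderOf_pos g).ne'
  refine ⟨(orderOf g).factorization p, Subtype.ext (h _ (pow_mem hg _) ?_)⟩
  rw [coe_pow, orderOf_pow, Nat.gcd_eq_right (Nat.ordProj_dvd _ p)]
  exact (Nat.coprime_ordCompl hp.out hn).symm

theorem IsPGroup.exists_mem_normalizer_notMem [Finite G] [Fact p.Prime] {T U : Subgroup G}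
    (hT : IsPGroup p T) (hUT : U < T) : ∃ x ∈ T, x ∈ normalizer (U : Set G) ∧ x ∉ U := by
  have : Group.IsNilpotent T := hT.isNilpotent
  have hlt : U.subgroupOf T < (normalizer (U : Set G)).subgroupOf T := by
    rw [subgroupOf_normalizer_eq hUT.le]
    exact Group.normalizerCondition_of_isNilpotent _
      (lt_top_iff_ne_top.mpr fun h => hUT.not_ge (subgroupOf_eq_top.mp h))
  obtain ⟨⟨x, hxT⟩, hxN, hxU⟩ := SetLike.exists_of_lt hlt
  exact ⟨x, hxT, hxN, hxU⟩

theorem conj_mem_centralizer_of_mem_normalizer {U : Subgroup G} {g y : G}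
    (hg : g ∈ normalizer (U : Set G)) (hy : y ∈ centralizer (U : Set G)) :
    g⁻¹ * y * g ∈ centralizer (U : Set G) := by
  rw [mem_centralizer_iff] at hy ⊢
  intro u hu
  calc u * (g⁻¹ * y * g) = g⁻¹ * (g * u * g⁻¹ * y) * g := by group
    _ = g⁻¹ * (y * (g * u * g⁻¹)) * g := by rw [hy _ ((mem_normalizer_iff.mp hg u).mp hu)]
    _ = g⁻¹ * y * g * u := by group

/- Thompson's `A × B` lemma for `A = ⟨y⟩`. With `U = C_{PR}(y)`, the normalizer condition in the
`p`-group `PR` yields `r ∈ R ∩ N(U) \ U`; then `c = r⁻¹ y r y⁻¹` lies in `C_R(P)`, so it commutes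
with `y`, and `(c y)ⁿ = (r⁻¹ y r)ⁿ = 1` for `n = orderOf y` forces `cⁿ = 1`, hence `c = 1`. -/
theorem mem_centralizer_of_mem_centralizer_inf_centralizer [Finite G] [Fact p.Prime]
    {P R : Subgroup G} [R.Normal] (hP : IsPGroup p P) (hR : IsPGroup p R) {y : G}
    (hy : (orderOf y).Coprime p) (hyP : y ∈ centralizer (P : Set G))
    (hyRP : y ∈ centralizer ((R ⊓ centralizer (P : Set G) : Subgroup G) : Set G)) :
    y ∈ centralizer (R : Set G) := by
  set U := (P ⊔ R) ⊓ centralizer {y}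
  have hyU : y ∈ centralizer (U : Set G) := fun u hu => mem_centralizer_singleton_iff.mp hu.2
  have hPU : P ≤ U := le_inf le_sup_left fun b hb => mem_centralizer_singleton_iff.mpr (hyP b hb)
  by_contra hyR
  have hUT : U < P ⊔ R := inf_le_left.lt_of_ne fun h =>
    hyR fun r hr => mem_centralizer_singleton_iff.mp (h.ge (mem_sup_right hr)).2
  obtain ⟨x, hxT, hxN, hxU⟩ := (hP.to_sup_of_normal_right hR).exists_mem_normalizer_notMem hUT
  obtain ⟨b, hb, r, hr, rfl⟩ := mem_sup_of_normal_right.mp hxT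
  have hrN : r ∈ normalizer (U : Set G) := by
    simpa using mul_mem (inv_mem (le_normalizer (hPU hb))) hxN
  refine hxU (mul_mem (hPU hb) ⟨mem_sup_right hr, mem_centralizer_singleton_iff.mpr ?_⟩)
  have hcU : r⁻¹ * y * r * y⁻¹ ∈ centralizer (U : Set G) :=
    mul_mem (conj_mem_centralizer_of_mem_normalizer hrN hyU) (inv_mem hyU)
  have hcR : r⁻¹ * y * r * y⁻¹ ∈ R := by
    simpa [mul_assoc] using mul_mem (inv_mem hr) (‹R.Normal›.conj_mem r hr y)
  have hcy : Commute (r⁻¹ * y * r * y⁻¹) y := hyRP _ ⟨hcR, centralizer_le hPU hcU⟩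
  have hpow : (r⁻¹ * y * r * y⁻¹) ^ orderOf y = 1 := by
    have h := hcy.mul_pow (orderOf y)
    rwa [pow_orderOf_eq_one, mul_one, show r⁻¹ * y * r * y⁻¹ * y = r⁻¹ * y * r⁻¹⁻¹ by group,
      conj_pow, pow_orderOf_eq_one, mul_one, mul_inv_cancel, eq_comm] at h
  have hc : r⁻¹ * y * r * y⁻¹ = 1 := hR.eq_one_of_mem_of_pow_eq_one hcR hy hpow
  rw [mul_inv_eq_one, mul_assoc, inv_mul_eq_iff_eq_mul] at hc
  exact hc.symm

theorem coe_mem_centralizer_of_subgroupOf_le {H K : Subgroup G} {Q : Subgroup H} (hKH : K ≤ H)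
    (hKQ : K.subgroupOf H ≤ Q) {c : H} (hc : c ∈ centralizer (Q : Set H)) :
    (c : G) ∈ centralizer (K : Set G) :=
  fun k hk => congrArg Subtype.val (hc ⟨k, hKH hk⟩ (hKQ hk))

end

theorem stmt0 {G : Type*} [Group G] [Finite G] (p : ℕ) [Fact p.Prime]
    (hG : CharacteristicP p G) (P H : Subgroup G) (hP : IsPGroup p ↥P)
    (h1 : P ≤ H) (h2 : Subgroup.centralizer (P : Set G) ≤ H) (h3 : H ≤ Subgroup.normalizer (P : Set G)) :
    CharacteristicP p ↥H := by
  have hPQ : P.subgroupOf H ≤ pCore p H :=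
    le_pCore ((normal_subgroupOf_iff_le_normalizer h1).mpr h3) hP.comap_subtype
  have hRQ : (pCore p G).subgroupOf H ≤ pCore p H :=
    le_pCore (normal_pCore.subgroupOf H) isPGroup_pCore.comap_subtype
  refine le_pCore inferInstance (isPGroup_of_forall_coprime_orderOf_eq_one fun c hc hcp => ?_)
  rw [← Subgroup.orderOf_coe] at hcp
  have hcR := mem_centralizer_of_mem_centralizer_inf_centralizer hP isPGroup_pCore hcp
    (coe_mem_centralizer_of_subgroupOf_le h1 hPQ hc)
    (coe_mem_centralizer_of_subgroupOf_le (inf_le_right.trans h2)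
      ((subgroupOf_mono _ inf_le_left).trans hRQ) hc)
  exact Subtype.ext (isPGroup_pCore.eq_one_of_mem_of_pow_eq_one (hG hcR) hcp (pow_orderOf_eq_one _))
end
end

section
/- Let G be a finite group of characteristic p. Then G has local characteristic p, i.e., for every nontrivial p-subgroup Q of G, the normalizer N_G(Q) has characteristic p. -/
open Subgroup

noncomputable section

/-!
Let `N = N_G(Q)`, `V = O_p(G)` and let `y ∈ C_N(O_p(N))` have prime order `r ≠ p`. Then `y`
centralizes `Q ≤ O_p(N)` and also `C_V(Q) ≤ V ∩ N ≤ O_p(N)`. By Thompson's `P × Q` lemma, applied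
to `N` acting on `V` by conjugation, `y` centralizes `V`, so `y ∈ C_G(V) ≤ V` is a `p`-element,
which is absurd. Hence `C_N(O_p(N))` is a normal `p`-subgroup of `N` and lies in `O_p(N)`.

The `P × Q` lemma goes by induction on `|V|`. If `y` fixes `c = y(v) v⁻¹` then `y^k(v) = c^k v`,
so `c^r = 1` and `c = 1`. This shows first that `y` centralizes the preimage of `C_{V/Z}(Q)`,
where `Z = C_{Z(V)}(Q) ≠ 1`, then by induction that `y` is trivial on `V/Z`, and finally that
`y` is trivial on `V`.
-/

section ActionLemmas

variable {A V : Type*} [Group V]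

theorem smul_eq_self_of_smul_mul_inv_fixed [Monoid A] [MulDistribMulAction A V] {p n : ℕ}
    (hV : IsPGroup p V) (hn : n.Coprime p) {x : A} (hxn : x ^ n = 1) {v : V}
    (hc : x • ((x • v) * v⁻¹) = (x • v) * v⁻¹) : x • v = v := by
  obtain ⟨c, hxv⟩ : ∃ c, x • v = c * v := ⟨(x • v) * v⁻¹, by group⟩
  rw [hxv, mul_inv_cancel_right] at hc
  have hpow : ∀ k : ℕ, x ^ k • v = c ^ k * v := by
    intro k
    induction k with
    | zero => simp
    | succ k ih => rw [pow_succ', mul_smul, ih, smul_mul', smul_pow', hc, hxv, pow_succ, mul_assoc]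
  have hcn : c ^ n = 1 := by simpa [hxn] using (hpow n).symm
  have hc1 : c = 1 := orderOf_eq_one_iff.mp <|
    ((hV.orderOf_coprime hn.symm c).eq_one_of_dvd (orderOf_dvd_of_pow_eq_one hcn))
  rw [hxv, hc1, one_mul]

theorem smul_eq_self_of_smul_eq_mul_fixed [Monoid A] [MulDistribMulAction A V] {p n : ℕ}
    (hV : IsPGroup p V) (hn : n.Coprime p) {B : Set A} {x : A} (hxn : x ^ n = 1)
    (hxB : ∀ b ∈ B, Commute x b) (hfix : ∀ v : V, (∀ b ∈ B, b • v = v) → x • v = v) {v : V}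
    (hv : ∀ b ∈ B, ∃ w : V, (∀ b' ∈ B, b' • w = w) ∧ b • v = v * w) : x • v = v := by
  refine smul_eq_self_of_smul_mul_inv_fixed hV hn hxn (hfix _ fun b hb => ?_)
  obtain ⟨w, hw, hbv⟩ := hv b hb
  have hbx : b • x • v = x • b • v := by rw [← mul_smul, ← mul_smul, (hxB b hb).eq]
  rw [smul_mul', smul_inv', hbx, hbv, smul_mul', hfix w hw]
  group

theorem smul_mem_center [Group A] [MulDistribMulAction A V] (a : A) {z : V}
    (hz : z ∈ center V) : a • z ∈ center V := by
  refine mem_center_iff.mpr fun y => ?_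
  rw [← smul_inv_smul a y, ← smul_mul', ← smul_mul', (mem_center_iff.mp hz _)]

abbrev quotientMulDistribMulAction [Monoid A] [MulDistribMulAction A V] (W : Subgroup V)
    [W.Normal] (hW : ∀ a : A, ∀ w ∈ W, a • w ∈ W) : MulDistribMulAction A (V ⧸ W) where
  smul a := QuotientGroup.map W W (MulDistribMulAction.toMonoidHom V a) (hW a)
  one_smul q := QuotientGroup.induction_on q fun v => congrArg _ (one_smul A v)
  mul_smul a b q := QuotientGroup.induction_on q fun v => congrArg _ (mul_smul a b v)
  smul_mul _ := map_mul _
  smul_one _ := map_one _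

theorem IsPGroup.exists_fixed_ne_one_mem_center {P : Type*} [Group P] [MulDistribMulAction P V]
    {p : ℕ} [Fact p.Prime] [Finite V] [Nontrivial V] (hP : IsPGroup p P) (hV : IsPGroup p V) :
    ∃ z ∈ center V, z ≠ 1 ∧ ∀ g : P, g • z = z := by
  let Z : SubMulAction P V :=
    { carrier := center V
      smul_mem' := fun g _ hz => smul_mem_center g hz }
  have hZ : p ∣ Nat.card (center V) :=
    haveI := hV.center_nontrivial
    (hV.to_subgroup _).card_eq_or_dvd.resolve_left Finite.one_lt_card.ne'
  obtain ⟨z, hz, hz1⟩ := hP.exists_fixed_point_of_prime_dvd_card_of_fixed_point Z hZ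
    (a := ⟨1, (center V).one_mem⟩) fun g => Subtype.ext (smul_one g)
  exact ⟨z, z.2, fun h => hz1 (Subtype.ext h.symm), fun g => congrArg Subtype.val (hz g)⟩

theorem smul_mem_fixedPoints_subgroup_of_normal [Group A] [MulDistribMulAction A V]
    {B : Subgroup A} [hB : B.Normal] (a : A) {w : V} (hw : w ∈ FixedPoints.subgroup B V) :
    a • w ∈ FixedPoints.subgroup B V := fun b => by
  have hb : a⁻¹ * b * a ∈ B := by simpa using hB.conj_mem b b.2 a⁻¹
  show (b : A) • a • w = a • w
  rw [← mul_smul, show (b : A) * a = a * (a⁻¹ * b * a) by group, mul_smul]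
  exact congrArg (a • ·) (hw ⟨_, hb⟩)

theorem IsPGroup.smul_eq_self_of_commute [Group A] [Finite V] [MulDistribMulAction A V]
    {p n : ℕ} [Fact p.Prime] (hV : IsPGroup p V) {B : Subgroup A} [B.Normal]
    (hB : IsPGroup p B) (hn : n.Coprime p) {x : A} (hxn : x ^ n = 1)
    (hxB : ∀ b ∈ B, Commute x b) (hfix : ∀ v : V, (∀ b ∈ B, b • v = v) → x • v = v) (v : V) :
    x • v = v := by
  induction hcard : Nat.card V using Nat.strong_induction_on generalizing V with
  | _ k ih =>
    rcases subsingleton_or_nontrivial V with _ | _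
    · exact Subsingleton.elim _ _
    obtain ⟨z, hzZ, hz1, hzB⟩ := hB.exists_fixed_ne_one_mem_center hV
    let W : Subgroup V := center V ⊓ FixedPoints.subgroup B V
    have hWfix : ∀ w ∈ W, ∀ b ∈ B, b • w = w := fun w hw b hb => hw.2 ⟨b, hb⟩
    have : W.Normal := ⟨fun w hw g => by
      rwa [mem_center_iff.mp hw.1 g, mul_inv_cancel_right]⟩
    have hWstable : ∀ a : A, ∀ w ∈ W, a • w ∈ W := fun a _ hw =>
      ⟨smul_mem_center a hw.1, smul_mem_fixedPoints_subgroup_of_normal a hw.2⟩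
    let _ := quotientMulDistribMulAction W hWstable
    have hmk : ∀ (a : A) (u : V), a • (u : V ⧸ W) = ((a • u : V) : V ⧸ W) := fun _ _ => rfl
    have hcardW : Nat.card (V ⧸ W) < k := by
      have hW1 : 1 < Nat.card W :=
        W.one_lt_card_iff_ne_bot.mpr fun h => hz1 (by
          simpa [h] using (show z ∈ W from ⟨hzZ, fun b => hzB b⟩))
      rw [← hcard, W.card_eq_card_quotient_mul_card_subgroup]
      exact lt_mul_of_one_lt_right Nat.card_pos hW1
    have hquot := ih _ hcardW (hV.to_quotient W) (fun q hq => by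
      induction q using QuotientGroup.induction_on with
      | H u =>
        rw [hmk, smul_eq_self_of_smul_eq_mul_fixed hV hn hxn hxB hfix fun b hb =>
          ⟨u⁻¹ * (b • u), hWfix _ (QuotientGroup.eq.mp (hq b hb).symm), by group⟩])
      (v : V ⧸ W) rfl
    rw [hmk, QuotientGroup.eq_iff_div_mem, div_eq_mul_inv] at hquot
    exact smul_eq_self_of_smul_mul_inv_fixed hV hn hxn (hfix _ (hWfix _ hquot))

end ActionLemmas

theorem IsPGroup.of_forall_orderOf_prime {H : Type*} [Group H] [Finite H] {p : ℕ}
    (h : ∀ g : H, (orderOf g).Prime → orderOf g = p) : IsPGroup p H :=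
  IsPGroup.of_card <| Nat.eq_prime_pow_of_unique_prime_dvd Nat.card_pos.ne' fun hd hdvd =>
    have := Fact.mk hd
    let ⟨g, hg⟩ := exists_prime_orderOf_dvd_card' _ hdvd
    hg ▸ h g (hg ▸ hd)

section pCore

variable {p : ℕ} {G : Type*} [Group G]

theorem pCore_mem [Finite G] : pCore p G ∈ {P : Subgroup G | P.Normal ∧ IsPGroup p P} :=
  SupClosed.biSup_mem (fun _ ⟨_, hPp⟩ _ ⟨_, hRp⟩ =>
    ⟨sup_normal _ _, hPp.to_sup_of_normal_right hRp⟩)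
    (Set.toFinite _) ⟨inferInstance, .of_bot⟩ fun _ h => h

instance pCore_normal [Finite G] : (pCore p G).Normal := pCore_mem.1

theorem pCore_isPGroup [Finite G] : IsPGroup p (pCore p G) := pCore_mem.2

theorem le_pCore_s1 {P : Subgroup G} (hP : P.Normal) (hPp : IsPGroup p P) : P ≤ pCore p G :=
  le_biSup (f := id) (show P ∈ {P : Subgroup G | P.Normal ∧ IsPGroup p P} from ⟨hP, hPp⟩)

theorem pCore_subgroupOf_le [Finite G] (H : Subgroup G) : (pCore p G).subgroupOf H ≤ pCore p H :=
  le_pCore_s1 (pCore_normal.subgroupOf H) pCore_isPGroup.comap_subtype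

theorem subgroupOf_normalizer_le_pCore {Q : Subgroup G} (hQ : IsPGroup p Q) :
    Q.subgroupOf (normalizer (Q : Set G)) ≤ pCore p (normalizer (Q : Set G)) :=
  le_pCore_s1 normal_in_normalizer hQ.comap_subtype

theorem isPGroup_centralizer_pCore_normalizer [Finite G] [Fact p.Prime] (hG : CharacteristicP p G)
    {Q : Subgroup G} (hQ : IsPGroup p Q) :
    IsPGroup p (centralizer (pCore p (normalizer (Q : Set G)) : Set (normalizer (Q : Set G)))) := by
  set N := normalizer (Q : Set G)
  set V := pCore p G
  refine IsPGroup.of_forall_orderOf_prime fun g hg => ?_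
  let y : N := g
  rw [← orderOf_coe] at hg ⊢
  by_contra hne
  let _ : MulDistribMulAction N V :=
    MulDistribMulAction.compHom V ((MulAut.conjNormal (H := V)).comp N.subtype)
  have hsmul : ∀ (a : N) (v : V), ((a • v : V) : G) = a * v * a⁻¹ :=
    fun _ _ => MulAut.conjNormal_apply _ _
  have hyR : ∀ h ∈ pCore p N, Commute y h := fun h hh => (mem_centralizer_iff.mp g.2 h hh).symm
  have hyV : ∀ v : V, y • v = v := by
    refine pCore_isPGroup.smul_eq_self_of_commute (B := Q.subgroupOf N) hQ.comap_subtype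
      ((Nat.coprime_primes hg Fact.out).mpr hne) (pow_orderOf_eq_one y)
      (fun b hb => hyR b (subgroupOf_normalizer_le_pCore hQ hb)) fun v hv => ?_
    have hvN : (v : G) ∈ N :=
      centralizer_le_normalizer _ <| mem_centralizer_iff.mpr fun q hq => by
        have := congrArg Subtype.val (hv ⟨q, le_normalizer hq⟩ hq)
        rwa [hsmul, coe_inv, mul_inv_eq_iff_eq_mul] at this
    have hvR : (⟨v, hvN⟩ : N) ∈ pCore p N := pCore_subgroupOf_le N v.2
    have hyv : (y : G) * v = v * y := congrArg Subtype.val (hyR _ hvR).eq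
    exact Subtype.ext <| by rw [hsmul, coe_inv, hyv, mul_inv_cancel_right]
  have hyG : (y : G) ∈ V := hG <| mem_centralizer_iff.mpr fun v hv => by
    have := congrArg Subtype.val (hyV ⟨v, hv⟩)
    rw [hsmul, coe_inv, mul_inv_eq_iff_eq_mul] at this
    exact this.symm
  obtain ⟨k, hk⟩ := (pCore_isPGroup (p := p) (G := G)).exists_orderOf_eq_pow ⟨y, hyG⟩
  rw [orderOf_mk, orderOf_coe] at hk
  exact hne ((Nat.prime_dvd_prime_iff_eq hg Fact.out).mp (hg.dvd_of_dvd_pow hk.dvd))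

end pCore

theorem stmt1 {G : Type*} [Group G] [Finite G] (p : ℕ) [Fact p.Prime]
    (hG : CharacteristicP p G) : LocalCharacteristicP p G :=
  fun _ _ hQ => le_pCore_s1 inferInstance (isPGroup_centralizer_pCore_normalizer hG hQ)
end
end

section
/- Let R be a p-centric subgroup of a finite group G and let Q be a p-subgroup of G containing R. Then Q is p-centric and Z(Q) ≤ Z(R). -/
open Subgroup

noncomputable section

namespace IsPCentric

variable {p : ℕ} {G : Type*} [Group G] {R : Subgroup G}

/-- `P` centralizes, hence normalizes, `Z(R) ≤ R`, so `P ⊔ Z(R)` is a `p`-subgroup of `C_G(R)`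
containing `Z(R)`, and maximality of `Z(R)` forces equality. -/
theorem le_inf_centralizer (hR : IsPCentric p R) {P : Subgroup G}
    (hPC : P ≤ centralizer (R : Set G)) (hP : IsPGroup p P) :
    P ≤ R ⊓ centralizer (R : Set G) := by
  have hPN : P ≤ normalizer ((R ⊓ centralizer (R : Set G) : Subgroup G) : Set G) :=
    hPC.trans <| (centralizer_le inf_le_left).trans (centralizer_le_normalizer _)
  have hsup := hR.2.2 _ (sup_le hPC inf_le_right) (hP.to_sup_of_normal_right' hR.2.1 hPN)
    le_sup_right
  exact hsup ▸ le_sup_left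

theorem inf_centralizer_le_of_le (hR : IsPCentric p R) {Q : Subgroup G} (hQ : IsPGroup p Q)
    (hRQ : R ≤ Q) : Q ⊓ centralizer (Q : Set G) ≤ R ⊓ centralizer (R : Set G) :=
  hR.le_inf_centralizer (inf_le_right.trans (centralizer_le hRQ)) hQ.to_inf_left

theorem of_le (hR : IsPCentric p R) {Q : Subgroup G} (hQ : IsPGroup p Q) (hRQ : R ≤ Q) :
    IsPCentric p Q := by
  refine ⟨hQ, hQ.to_inf_left, fun P hPC hP hZP => le_antisymm ?_ hZP⟩
  have hPZ := hR.le_inf_centralizer (hPC.trans (centralizer_le hRQ)) hP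
  exact le_inf (hPZ.trans (inf_le_left.trans hRQ)) hPC

end IsPCentric

theorem stmt4_general {G : Type*} [Group G] (p : ℕ)
    (R Q : Subgroup G) (hR : IsPCentric p R) (hQ : IsPGroup p ↥Q) (hRQ : R ≤ Q) :
    IsPCentric p Q ∧
      Q ⊓ Subgroup.centralizer (Q : Set G) ≤ R ⊓ Subgroup.centralizer (R : Set G) :=
  ⟨hR.of_le hQ hRQ, hR.inf_centralizer_le_of_le hQ hRQ⟩

theorem stmt4 {G : Type*} [Group G] [Finite G] (p : ℕ) [Fact p.Prime]
    (R Q : Subgroup G) (hR : IsPCentric p R) (hQ : IsPGroup p ↥Q) (hRQ : R ≤ Q) :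
    IsPCentric p Q ∧
      Q ⊓ Subgroup.centralizer (Q : Set G) ≤ R ⊓ Subgroup.centralizer (R : Set G) :=
  stmt4_general p R Q hR hQ hRQ
end
end

section
/- Let P be a nontrivial p-subgroup of G and Q a p-subgroup with P < Q such that Z(Q) contains a p-central element of G. Then Z(N_Q(P)) contains a p-central element of G; that is, N_Q(P) is a distinguished p-subgroup. -/
open Subgroup

noncomputable section

namespace Subgroup

variable {G : Type*} [Group G]

theorem inf_centralizer_le_normalizer_of_le {P Q : Subgroup G} (hPQ : P ≤ Q) :
    Q ⊓ centralizer (Q : Set G) ≤ normalizer (P : Set G) :=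
  inf_le_right.trans ((centralizer_le hPQ).trans (centralizer_le_normalizer _))

theorem inf_centralizer_le_inf_centralizer_of_le {H Q : Subgroup G} (hHQ : H ≤ Q)
    (hZH : Q ⊓ centralizer (Q : Set G) ≤ H) :
    Q ⊓ centralizer (Q : Set G) ≤ H ⊓ centralizer (H : Set G) :=
  le_inf hZH (inf_le_right.trans (centralizer_le hHQ))

end Subgroup

theorem stmt7_general {G : Type*} [Group G] (p : ℕ)
    (P Q : Subgroup G) (hPQ : P < Q)
    (hz : ∃ x ∈ Q ⊓ Subgroup.centralizer (Q : Set G), IsPCentralElement p x) :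
    ∃ x ∈ (Q ⊓ Subgroup.normalizer (P : Set G)) ⊓
        Subgroup.centralizer ((Q ⊓ Subgroup.normalizer (P : Set G) : Subgroup G) : Set G),
      IsPCentralElement p x := by
  obtain ⟨x, hxZ, hx⟩ := hz
  have hZN : Q ⊓ centralizer (Q : Set G) ≤ Q ⊓ normalizer (P : Set G) :=
    le_inf inf_le_left (inf_centralizer_le_normalizer_of_le hPQ.le)
  exact ⟨x, inf_centralizer_le_inf_centralizer_of_le inf_le_left hZN hxZ, hx⟩

theorem stmt7 {G : Type*} [Group G] [Finite G] (p : ℕ) [Fact p.Prime]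
    (P Q : Subgroup G) (hPne : P ≠ ⊥) (hP : IsPGroup p ↥P) (hQ : IsPGroup p ↥Q) (hPQ : P < Q)
    (hz : ∃ x ∈ Q ⊓ Subgroup.centralizer (Q : Set G), IsPCentralElement p x) :
    ∃ x ∈ (Q ⊓ Subgroup.normalizer (P : Set G)) ⊓
        Subgroup.centralizer ((Q ⊓ Subgroup.normalizer (P : Set G) : Subgroup G) : Set G),
      IsPCentralElement p x :=
  stmt7_general p P Q hPQ hz
end
end

section
/- Let P be a nontrivial p-subgroup of G such that N_G(P) has characteristic p. Then O_p(N_G(P)) is p-centric in G and its center contains a p-central element of G. -/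
open Subgroup

noncomputable section

/-!
Since `P` is a normal `p`-subgroup of `N = N_G(P)`, it lies in `R = O_p(N)`, so
`C_G(R) ≤ C_G(P) ≤ N`; characteristic `p` of `N` then gives `C_G(R) ≤ R`, i.e. `C_G(R) = Z(R)`
is a `p`-group and hence Sylow in itself. An element of order `p` in the centre of a Sylow
subgroup `S ≥ R` centralizes `R`, so it lies in `Z(R)` and is `p`-central.
-/

section

variable {G : Type*} [Group G] {p : ℕ}

theorem le_pCore_s8 {Q : Subgroup G} (hQn : Q.Normal) (hQ : IsPGroup p Q) : Q ≤ pCore p G :=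
  le_iSup₂ (f := fun Q (_ : Q ∈ {Q : Subgroup G | Q.Normal ∧ IsPGroup p Q}) => Q) Q ⟨hQn, hQ⟩

theorem le_map_pCore_normalizer {P : Subgroup G} (hP : IsPGroup p P) :
    P ≤ (pCore p (normalizer (P : Set G))).map (normalizer (P : Set G)).subtype := by
  have hPN := map_mono (f := (normalizer (P : Set G)).subtype)
    (le_pCore_s8 normal_in_normalizer hP.comap_subtype)
  rwa [subgroupOf_map_subtype, inf_eq_left.mpr le_normalizer] at hPN

theorem centralizer_map_subtype_le {H : Subgroup G} {K : Subgroup H}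
    (hH : centralizer (K.map H.subtype : Set G) ≤ H) (hK : centralizer (K : Set H) ≤ K) :
    centralizer (K.map H.subtype : Set G) ≤ K.map H.subtype := by
  intro x hx
  refine ⟨⟨x, hH hx⟩, hK <| mem_centralizer_iff.mpr fun k hk => ?_, rfl⟩
  exact Subtype.ext (mem_centralizer_iff.mp hx k ⟨k, hk, rfl⟩)

theorem isPCentric_of_centralizer_le {R : Subgroup G} (hR : IsPGroup p R)
    (hC : centralizer (R : Set G) ≤ R) : IsPCentric p R :=
  ⟨hR, hR.to_le inf_le_left, fun _ hQ _ hRQ => le_antisymm (le_inf (hQ.trans hC) hQ) hRQ⟩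

theorem IsPGroup.exists_mem_center_orderOf_eq [Finite G] [Nontrivial G] [Fact p.Prime]
    (hG : IsPGroup p G) : ∃ z ∈ center G, orderOf z = p := by
  have := hG.center_nontrivial
  obtain ⟨n, hn, hcard⟩ := (hG.to_subgroup (center G)).nontrivial_iff_card.mp this
  obtain ⟨z, hz⟩ := exists_prime_orderOf_dvd_card' p (hcard ▸ dvd_pow_self p hn.ne')
  exact ⟨z, z.2, by rwa [Subgroup.orderOf_coe]⟩

theorem exists_isPCentralElement_mem_centralizer [Finite G] [Fact p.Prime] {R : Subgroup G}
    (hR : IsPGroup p R) (hRne : R ≠ ⊥) :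
    ∃ x ∈ centralizer (R : Set G), IsPCentralElement p x := by
  obtain ⟨S, hRS⟩ := hR.exists_le_sylow
  have : Nontrivial S := (nontrivial_iff_ne_bot _).mpr (ne_bot_of_le_ne_bot hRne hRS)
  obtain ⟨z, hzZ, hz⟩ := S.isPGroup'.exists_mem_center_orderOf_eq
  have hzS : ∀ y ∈ (S : Subgroup G), (z : G) * y = y * z := fun y hy =>
    congrArg Subtype.val (mem_center_iff.mp hzZ ⟨y, hy⟩).symm
  refine ⟨z, mem_centralizer_iff.mpr fun y hy => (hzS y (hRS hy)).symm, ?_, S, z.2, hzS⟩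
  rwa [Subgroup.orderOf_coe]

end

theorem stmt8 {G : Type*} [Group G] [Finite G] (p : ℕ) [Fact p.Prime]
    (P : Subgroup G) (hPne : P ≠ ⊥) (hP : IsPGroup p ↥P)
    (hN : CharacteristicP p ↥(Subgroup.normalizer (P : Set G)))
    (R : Subgroup G) (hR : R = (pCore p ↥(Subgroup.normalizer (P : Set G))).map (Subgroup.normalizer (P : Set G)).subtype) :
    IsPCentric p R ∧
      ∃ x ∈ R ⊓ Subgroup.centralizer (R : Set G), IsPCentralElement p x := by
  have hPR : P ≤ R := hR ▸ le_map_pCore_normalizer hP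
  have hRp : IsPGroup p R := hR ▸ isPGroup_pCore.map _
  have hCR : centralizer (R : Set G) ≤ R := by
    have hCN : centralizer (R : Set G) ≤ normalizer (P : Set G) :=
      (centralizer_le hPR).trans (centralizer_le_normalizer _)
    rw [hR] at hCN ⊢
    exact centralizer_map_subtype_le hCN hN
  obtain ⟨x, hxC, hx⟩ := exists_isPCentralElement_mem_centralizer hRp (ne_bot_of_le_ne_bot hPne hPR)
  exact ⟨isPCentric_of_centralizer_le hRp hCR, x, ⟨hCR hxC, hxC⟩, hx⟩
end
end

section
/- If G has local characteristic p, then the collection of p-centric p-radical subgroups of G equals the collection of all nontrivial p-radical subgroups of G. -/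
open Subgroup

noncomputable section

/-! For a nontrivial `p`-radical subgroup `R`, the `p`-core of `N_G(R)` is `R` itself, so the
characteristic-`p` condition on `N_G(R)` says exactly that `C_G(R) ≤ R`. Then `Z(R) = C_G(R)`,
which is trivially a maximal `p`-subgroup of `C_G(R)`. -/

theorem centralizer_le_of_isRadicalPSubgroup {p : ℕ} {G : Type*} [Group G] {R : Subgroup G}
    (hR : IsRadicalPSubgroup p R) (hN : CharacteristicP p (normalizer (R : Set G))) :
    centralizer (R : Set G) ≤ R := by
  set N := normalizer (R : Set G)
  have mem_pCore_iff (y : N) : y ∈ pCore p N ↔ (y : G) ∈ R := by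
    rw [← hR.2]
    exact (mem_map_iff_mem N.subtype_injective).symm
  intro x hx
  have hxC : (⟨x, centralizer_le_normalizer _ hx⟩ : N) ∈ centralizer (pCore p N : Set N) :=
    mem_centralizer_iff.mpr fun y hy =>
      Subtype.ext (mem_centralizer_iff.mp hx _ ((mem_pCore_iff y).mp hy))
  exact (mem_pCore_iff _).mp (hN hxC)

theorem IsPCentric.of_centralizer_le {p : ℕ} {G : Type*} [Group G] {R : Subgroup G}
    (hR : IsPGroup p R) (hC : centralizer (R : Set G) ≤ R) : IsPCentric p R :=
  ⟨hR, hR.to_le inf_le_left, fun _ hQC _ hle => le_antisymm (le_inf (hQC.trans hC) hQC) hle⟩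

theorem stmt10_general {G : Type*} [Group G] (p : ℕ)
    (hG : LocalCharacteristicP p G) :
    {R : Subgroup G | R ≠ ⊥ ∧ IsRadicalPSubgroup p R ∧ IsPCentric p R} =
      {R : Subgroup G | R ≠ ⊥ ∧ IsRadicalPSubgroup p R} := by
  ext R
  refine ⟨fun ⟨hbot, hrad, _⟩ => ⟨hbot, hrad⟩, fun ⟨hbot, hrad⟩ => ⟨hbot, hrad, ?_⟩⟩
  exact IsPCentric.of_centralizer_le hrad.1
    (centralizer_le_of_isRadicalPSubgroup hrad (hG R hbot hrad.1))

theorem stmt10 {G : Type*} [Group G] [Finite G] (p : ℕ) [Fact p.Prime]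
    (hG : LocalCharacteristicP p G) :
    {R : Subgroup G | R ≠ ⊥ ∧ IsRadicalPSubgroup p R ∧ IsPCentric p R} =
      {R : Subgroup G | R ≠ ⊥ ∧ IsRadicalPSubgroup p R} :=
  stmt10_general p hG
end
end

section
/- Let N = N_G(T) = (O_C × H):S' be a finite group where H is normal in N with complement D = O_C:S' containing O_C = O_p(TC_G(T)), T ≤ O_C, and elements of H commute with elements of O_C. Then D·C_G(D) = D·C_H(S'). -/
open Subgroup

noncomputable section

namespace Subgroup

variable {G : Type*} [Group G]

theorem exists_mul_eq_of_isComplement'_subgroupOf {K H D : Subgroup G}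
    (hHD : (H.subgroupOf K).IsComplement' (D.subgroupOf K)) {g : G} (hg : g ∈ K) :
    ∃ h ∈ H, ∃ d ∈ D, h * d = g := by
  obtain ⟨⟨⟨h, hh⟩, ⟨d, hd⟩⟩, hhd, -⟩ := hHD.existsUnique ⟨g, hg⟩
  exact ⟨h, hh, d, hd, congrArg Subtype.val hhd⟩

theorem disjoint_of_isComplement'_subgroupOf {K H D : Subgroup G} (hHK : H ≤ K)
    (hHD : (H.subgroupOf K).IsComplement' (D.subgroupOf K)) : Disjoint H D := by
  refine disjoint_def.mpr fun {x} hxH hxD => ?_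
  have hx : (⟨x, hHK hxH⟩ : K) = 1 := disjoint_def.mp hHD.disjoint hxH hxD
  exact congrArg Subtype.val hx

theorem le_sup_of_isComplement'_subgroupOf {K H D : Subgroup G}
    (hHD : (H.subgroupOf K).IsComplement' (D.subgroupOf K)) : K ≤ H ⊔ D := by
  intro g hg
  obtain ⟨h, hh, d, hd, rfl⟩ := exists_mul_eq_of_isComplement'_subgroupOf hHD hg
  exact mul_mem (mem_sup_left hh) (mem_sup_right hd)

/-- For `s ∈ D` the commutator `[s, h]` lies in `H`, and, since `h * d` centralizes `D`, it equals
`[s, d⁻¹] ∈ D`. -/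
theorem mem_centralizer_of_mul_mem_centralizer {H D : Subgroup G} (hDH : D ≤ normalizer H)
    (hHD : Disjoint H D) {h d : G} (hh : h ∈ H) (hd : d ∈ D) (hc : h * d ∈ centralizer D) :
    h ∈ centralizer D := by
  refine mem_centralizer_iff_commutator_eq_one.mpr fun s hs => ?_
  rw [commutatorElement_def]
  set c := h * d
  have hcomm_H : s * h * s⁻¹ * h⁻¹ ∈ H :=
    mul_mem ((mem_normalizer_iff.mp (hDH hs) h).mp hh) (inv_mem hh)
  have hx : s * d⁻¹ * s⁻¹ * d ∈ D := mul_mem (mul_mem (mul_mem hs (inv_mem hd)) (inv_mem hs)) hd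
  have hcomm_D : s * h * s⁻¹ * h⁻¹ = s * d⁻¹ * s⁻¹ * d := by
    have hcs : s * c = c * s := mem_centralizer_iff.mp hc s hs
    have hcx := mem_centralizer_iff.mp hc _ hx
    have hh' : h = c * d⁻¹ := by simp [c]
    calc s * h * s⁻¹ * h⁻¹ = (s * c) * d⁻¹ * s⁻¹ * d * c⁻¹ := by rw [hh']; group
      _ = c * (s * d⁻¹ * s⁻¹ * d) * c⁻¹ := by rw [hcs]; group
      _ = s * d⁻¹ * s⁻¹ * d := by rw [← hcx]; group
  exact disjoint_def.mp hHD hcomm_H (hcomm_D ▸ hx)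

theorem centralizer_le_sup_inf_centralizer {K H D : Subgroup G} (hHK : H ≤ K)
    [(H.subgroupOf K).Normal] (hDK : D ≤ K)
    (hHD : (H.subgroupOf K).IsComplement' (D.subgroupOf K)) (hCK : centralizer (D : Set G) ≤ K) :
    centralizer (D : Set G) ≤ D ⊔ (H ⊓ centralizer D) := by
  intro c hc
  obtain ⟨h, hh, d, hd, rfl⟩ := exists_mul_eq_of_isComplement'_subgroupOf hHD (hCK hc)
  have hhc : h ∈ centralizer D := mem_centralizer_of_mul_mem_centralizer
    (hDK.trans (le_normalizer_of_normal_subgroupOf hHK))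
    (disjoint_of_isComplement'_subgroupOf hHK hHD) hh hd hc
  exact mul_mem (mem_sup_right ⟨hh, hhc⟩) (mem_sup_left hd)

theorem le_centralizer_of_le_sup {A B D X : Subgroup G} (hD : D ≤ A ⊔ B)
    (hA : X ≤ centralizer A) (hB : X ≤ centralizer B) : X ≤ centralizer D :=
  le_centralizer_iff.mpr <| hD.trans <| sup_le (le_centralizer_iff.mp hA) (le_centralizer_iff.mp hB)

end Subgroup

theorem stmt18_general {G : Type*} [Group G]
    (T : Subgroup G)
    (H D S' OC : Subgroup G)
    (hTOC : T ≤ OC)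
    (hHN : H ≤ Subgroup.normalizer (T : Set G))
    (hHnormal : (H.subgroupOf (Subgroup.normalizer (T : Set G))).Normal)
    (hDN : D ≤ Subgroup.normalizer (T : Set G))
    (hcomp : (H.subgroupOf (Subgroup.normalizer (T : Set G))).IsComplement' (D.subgroupOf (Subgroup.normalizer (T : Set G))))
    (hOCD : OC ≤ D) (hS'D : S' ≤ D)
    (hsplit : (OC.subgroupOf D).IsComplement' (S'.subgroupOf D))
    (hcomm : ∀ h ∈ H, ∀ x ∈ OC, h * x = x * h) :
    D ⊔ Subgroup.centralizer (D : Set G) =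
      D ⊔ (H ⊓ Subgroup.centralizer (S' : Set G)) := by
  have hCN : centralizer (D : Set G) ≤ normalizer (T : Set G) :=
    (centralizer_le (SetLike.coe_subset_coe.mpr (hTOC.trans hOCD))).trans (centralizer_le_normalizer _)
  have hHOC : H ≤ centralizer OC := fun h hh =>
    mem_centralizer_iff.mpr fun x hx => (hcomm h hh x hx).symm
  apply le_antisymm
  · refine sup_le le_sup_left ((centralizer_le_sup_inf_centralizer hHN hDN hcomp hCN).trans ?_)
    exact sup_le_sup_left (inf_le_inf_left _ (centralizer_le hS'D)) _
  · refine sup_le_sup_left (le_centralizer_of_le_sup (le_sup_of_isComplement'_subgroupOf hsplit)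
      (inf_le_left.trans hHOC) inf_le_right) _

theorem stmt18 {G : Type*} [Group G] [Finite G] (p : ℕ) [Fact p.Prime]
    (T : Subgroup G) (hT : IsPGroup p ↥T)
    (H D S' OC : Subgroup G)
    (hOC : OC = (pCore p ↥(T ⊔ Subgroup.centralizer (T : Set G))).map
      (T ⊔ Subgroup.centralizer (T : Set G)).subtype)
    (hTOC : T ≤ OC)
    (hHN : H ≤ Subgroup.normalizer (T : Set G))
    (hHnormal : (H.subgroupOf (Subgroup.normalizer (T : Set G))).Normal)
    (hDN : D ≤ Subgroup.normalizer (T : Set G))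
    (hcomp : (H.subgroupOf (Subgroup.normalizer (T : Set G))).IsComplement' (D.subgroupOf (Subgroup.normalizer (T : Set G))))
    (hOCD : OC ≤ D) (hS'D : S' ≤ D)
    (hsplit : (OC.subgroupOf D).IsComplement' (S'.subgroupOf D))
    (hD : IsPGroup p ↥D)
    (hcomm : ∀ h ∈ H, ∀ x ∈ OC, h * x = x * h) :
    D ⊔ Subgroup.centralizer (D : Set G) =
      D ⊔ (H ⊓ Subgroup.centralizer (S' : Set G)) :=
  stmt18_general T H D S' OC hTOC hHN hHnormal hDN hcomp hOCD hS'D hsplit hcomm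
end
end
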